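/- (Practical bound, Eq. (6).) Equip ℝⁿ with the ℓ1 norm. Let 0 < α ≤ β, let η > 0 with η ≤ 2α, let 2 ≤ b, and let M ⊂ ℝⁿ be a finite set with |M| = m and b ≤ m, such that every subset S ⊆ M with |S| = b is α-β-connected. If m − b + 1 > (2β/η + 1)ⁿ − (2α/η − 1)ⁿ, then M is not η-separated; i.e., there exist z, z' ∈ M with z ≠ z' and ‖z − z'‖₁ < η. -/

import Mathlib

/-! If `M` were η-separated, the α-β-connectedness of its `b`-subsets would put all distances in
`M` at or above α, and around any `z ∈ M` at most `b - 2` points farther than β: a `b`-subset made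
of `z` and `b - 1` far points would leave `z` isolated at threshold β. So at least `m - b + 1` points
lie in the shell `α ≤ ‖x - z‖₁ ≤ β`. The balls of radius η/2 around them are disjoint, miss the ball
of radius α - η/2 around `z`, and all lie in the ball of radius β + η/2; since Haar volumes of balls
scale like rⁿ, comparing volumes gives `m - b + 1 ≤ (2β/η + 1)ⁿ - (2α/η - 1)ⁿ`. -/

/-- The ℓ1 norm on `ℝⁿ`. -/
def l1norm (n : ℕ) (x : Fin n → ℝ) : ℝ := ∑ i, |x i|

/-- `S` is α-β-connected (w.r.t. the ℓ1 norm on `ℝⁿ`):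
(i) `α` is the minimum of the pairwise distances of `S`, and
(ii) `β` is the minimum of all `r ≥ 0` such that the graph on `S` joining two
distinct points exactly when their distance is `≤ r` is connected. -/
def ABConnected (n : ℕ) (α β : ℝ) (S : Finset (Fin n → ℝ)) : Prop :=
  IsLeast {d : ℝ | ∃ x ∈ S, ∃ y ∈ S, x ≠ y ∧ l1norm n (x - y) = d} α ∧
  IsLeast {r : ℝ | 0 ≤ r ∧
    (SimpleGraph.fromRel
      (fun a b : {x // x ∈ S} => l1norm n (a.1 - b.1) ≤ r)).Connected} β

open MeasureTheory Metric Module Finset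

section Packing

variable {E : Type*} [NormedAddCommGroup E] [NormedSpace ℝ E] [FiniteDimensional ℝ E]

theorem MeasureTheory.Measure.addHaar_real_ball_of_pos [MeasurableSpace E] [BorelSpace E]
    (μ : Measure E) [μ.IsAddHaarMeasure] (x : E) {r : ℝ} (hr : 0 < r) :
    μ.real (ball x r) = r ^ finrank ℝ E * μ.real (ball 0 1) := by
  rw [measureReal_def, μ.addHaar_ball_of_pos x hr, ENNReal.toReal_mul,
    ENNReal.toReal_ofReal (by positivity), measureReal_def]

variable {N : Finset E} {z : E} {α β η : ℝ}

theorem sum_measureReal_ball_add_measureReal_closedBall_le [MeasurableSpace E] [BorelSpace E]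
    (μ : Measure E) [μ.IsAddHaarMeasure] (hη : 0 < η) (hαβ : α ≤ β)
    (hsep : (N : Set E).Pairwise fun x y => η ≤ dist x y)
    (hN : ∀ x ∈ N, α ≤ dist x z ∧ dist x z ≤ β) :
    ∑ x ∈ N, μ.real (ball x (η / 2)) + μ.real (closedBall z (α - η / 2))
      ≤ μ.real (ball z (β + η / 2)) := by
  have hdisj : (N : Set E).PairwiseDisjoint fun x => ball x (η / 2) :=
    fun x hx y hy hxy => ball_disjoint_ball (by linarith [hsep hx hy hxy])
  have hdisj_centre : Disjoint (⋃ x ∈ N, ball x (η / 2)) (closedBall z (α - η / 2)) :=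
    Set.disjoint_iUnion₂_left.2 fun x hx =>
      (closedBall_disjoint_ball (by linarith [(hN x hx).1, dist_comm x z])).symm
  have hballs : ⋃ x ∈ N, ball x (η / 2) ⊆ ball z (β + η / 2) :=
    Set.iUnion₂_subset fun x hx => ball_subset_ball' (by linarith [(hN x hx).2])
  have hcentre : closedBall z (α - η / 2) ⊆ ball z (β + η / 2) :=
    closedBall_subset_ball (by linarith)
  have hfin : μ (ball z (β + η / 2)) ≠ ⊤ := measure_ball_lt_top.ne
  calc ∑ x ∈ N, μ.real (ball x (η / 2)) + μ.real (closedBall z (α - η / 2))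
      = μ.real ((⋃ x ∈ N, ball x (η / 2)) ∪ closedBall z (α - η / 2)) := by
        rw [measureReal_union hdisj_centre measurableSet_closedBall
          (measure_ne_top_of_subset hballs hfin) (measure_ne_top_of_subset hcentre hfin),
          measureReal_biUnion_finset hdisj fun _ _ => measurableSet_ball]
    _ ≤ μ.real (ball z (β + η / 2)) := measureReal_mono (Set.union_subset hballs hcentre)

theorem card_le_of_pairwise_le_dist (hη : 0 < η) (hηα : η ≤ 2 * α) (hαβ : α ≤ β)
    (hsep : (N : Set E).Pairwise fun x y => η ≤ dist x y)
    (hN : ∀ x ∈ N, α ≤ dist x z ∧ dist x z ≤ β) :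
    (#N : ℝ) ≤ (2 * β / η + 1) ^ finrank ℝ E - (2 * α / η - 1) ^ finrank ℝ E := by
  borelize E
  set μ : Measure E := Measure.addHaar
  have hunit : 0 < μ.real (ball 0 1) :=
    ENNReal.toReal_pos (measure_ball_pos μ 0 one_pos).ne' measure_ball_lt_top.ne
  have key := sum_measureReal_ball_add_measureReal_closedBall_le μ hη hαβ hsep hN
  rw [sum_congr rfl fun x _ => μ.addHaar_real_ball_of_pos x (half_pos hη), sum_const,
    μ.addHaar_real_closedBall z (by linarith), μ.addHaar_real_ball_of_pos z (by linarith),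
    nsmul_eq_mul, ← mul_assoc, ← add_mul, mul_le_mul_iff_left₀ hunit] at key
  have hβ : β + η / 2 = η / 2 * (2 * β / η + 1) := by field_simp
  have hα : α - η / 2 = η / 2 * (2 * α / η - 1) := by field_simp
  rw [hβ, hα, mul_pow, mul_pow] at key
  exact le_sub_iff_add_le.2 <|
    le_of_mul_le_mul_left (by linarith) (pow_pos (half_pos hη) (finrank ℝ E))

end Packing

theorem l1norm_sub_comm {n : ℕ} (x y : Fin n → ℝ) : l1norm n (x - y) = l1norm n (y - x) := by
  simp only [l1norm, Pi.sub_apply, abs_sub_comm]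

theorem dist_toLp_one {n : ℕ} (x y : Fin n → ℝ) :
    dist (WithLp.toLp 1 x) (WithLp.toLp 1 y) = l1norm n (x - y) := by
  simp [PiLp.dist_eq_of_L1, Real.dist_eq, l1norm]

theorem finrank_piLp_one (n : ℕ) : finrank ℝ (PiLp 1 fun _ : Fin n => ℝ) = n := by
  rw [(WithLp.linearEquiv 1 ℝ (Fin n → ℝ)).finrank_eq, finrank_fin_fun]

theorem card_le_of_pairwise_le_l1norm_sub {n : ℕ} {N : Finset (Fin n → ℝ)} {z : Fin n → ℝ}
    {α β η : ℝ} (hη : 0 < η) (hηα : η ≤ 2 * α) (hαβ : α ≤ β)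
    (hsep : (N : Set (Fin n → ℝ)).Pairwise fun x y => η ≤ l1norm n (x - y))
    (hN : ∀ x ∈ N, α ≤ l1norm n (x - z) ∧ l1norm n (x - z) ≤ β) :
    (#N : ℝ) ≤ (2 * β / η + 1) ^ n - (2 * α / η - 1) ^ n := by
  have hpack := card_le_of_pairwise_le_dist (N := N.map ⟨WithLp.toLp 1, WithLp.toLp_injective 1⟩)
    (z := WithLp.toLp 1 z) hη hηα hαβ ?_ ?_
  · rwa [card_map, finrank_piLp_one] at hpack
  · rintro _ hx' _ hy' hxy
    obtain ⟨x, hx, rfl⟩ := mem_map.1 hx'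
    obtain ⟨y, hy, rfl⟩ := mem_map.1 hy'
    rw [dist_toLp_one]
    exact hsep hx hy fun h => hxy (h ▸ rfl)
  · simpa only [mem_map, Function.Embedding.coeFn_mk, forall_exists_index, and_imp,
      forall_apply_eq_imp_iff₂, dist_toLp_one] using hN

namespace ABConnected

variable {n : ℕ} {α β : ℝ} {S : Finset (Fin n → ℝ)}

theorem le_l1norm_sub (h : ABConnected n α β S) {x y : Fin n → ℝ} (hx : x ∈ S) (hy : y ∈ S)
    (hxy : x ≠ y) : α ≤ l1norm n (x - y) :=
  h.1.2 ⟨x, hx, y, hy, hxy, rfl⟩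

theorem exists_ne_l1norm_sub_le (h : ABConnected n α β S) (hS : 1 < #S) {z : Fin n → ℝ}
    (hz : z ∈ S) : ∃ x ∈ S, x ≠ z ∧ l1norm n (x - z) ≤ β := by
  have : Nontrivial S := Set.nontrivial_coe_sort.2 (one_lt_card_iff_nontrivial.1 hS)
  obtain ⟨x, hne, hle⟩ := h.2.1.2.preconnected.exists_adj_of_nontrivial ⟨z, hz⟩
  refine ⟨x, x.2, fun hxz => hne (Subtype.ext hxz.symm), ?_⟩
  rcases hle with hle | hle
  · rwa [l1norm_sub_comm]
  · exact hle

end ABConnected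

section Subsets

variable {n b : ℕ} {α β : ℝ} {M : Finset (Fin n → ℝ)}

theorem le_l1norm_sub_of_forall_card_eq (hb : 2 ≤ b) (hbM : b ≤ #M)
    (hconn : ∀ S ⊆ M, #S = b → ABConnected n α β S) {x y : Fin n → ℝ} (hx : x ∈ M)
    (hy : y ∈ M) (hxy : x ≠ y) : α ≤ l1norm n (x - y) := by
  obtain ⟨S, hxyS, hSM, hS⟩ := exists_subsuperset_card_eq
    (insert_subset hx (singleton_subset_iff.2 hy)) (card_le_two.trans hb) hbM
  exact (hconn S hSM hS).le_l1norm_sub (hxyS (mem_insert_self _ _))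
    (hxyS (mem_insert_of_mem (mem_singleton_self _))) hxy

theorem card_filter_lt_l1norm_sub_lt (hb : 2 ≤ b)
    (hconn : ∀ S ⊆ M, #S = b → ABConnected n α β S) {z : Fin n → ℝ} (hz : z ∈ M) :
    #{x ∈ M.erase z | β < l1norm n (x - z)} < b - 1 := by
  by_contra! hfar
  obtain ⟨T, hTfar, hT⟩ := exists_subset_card_eq hfar
  have hTM : T ⊆ M.erase z := hTfar.trans (filter_subset _ _)
  have hzT : z ∉ T := fun h => (mem_erase.1 (hTM h)).1 rfl
  have hS : #(insert z T) = b := by rw [card_insert_of_notMem hzT, hT]; omega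
  obtain ⟨x, hxS, hxz, hxβ⟩ := (hconn _ (insert_subset hz (hTM.trans (erase_subset _ _))) hS)
    |>.exists_ne_l1norm_sub_le (by omega) (mem_insert_self z T)
  exact (mem_filter.1 (hTfar ((mem_insert.1 hxS).resolve_left hxz))).2.not_ge hxβ

theorem card_sub_add_one_le_card_filter_l1norm_sub_le (hb : 2 ≤ b) (hbM : b ≤ #M)
    (hconn : ∀ S ⊆ M, #S = b → ABConnected n α β S) {z : Fin n → ℝ} (hz : z ∈ M) :
    #M - b + 1 ≤ #{x ∈ M.erase z | l1norm n (x - z) ≤ β} := by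
  have hsplit : #{x ∈ M.erase z | l1norm n (x - z) ≤ β}
      + #{x ∈ M.erase z | β < l1norm n (x - z)} = #M - 1 := by
    simpa only [not_le, card_erase_of_mem hz] using
      card_filter_add_card_filter_not (s := M.erase z) fun x => l1norm n (x - z) ≤ β
  have := card_filter_lt_l1norm_sub_lt hb hconn hz
  omega

end Subsets

theorem practical_bound_general
    (n : ℕ) (b m : ℕ) (hb : 2 ≤ b)
    (α β η : ℝ) (hαβ : α ≤ β) (hη : 0 < η) (hηα : η ≤ 2 * α)
    (M : Finset (Fin n → ℝ)) (hM : M.card = m) (hbm : b ≤ m)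
    (hconn : ∀ S ⊆ M, S.card = b → ABConnected n α β S)
    (hcard : ((m - b + 1 : ℕ) : ℝ) > (2 * β / η + 1) ^ n - (2 * α / η - 1) ^ n) :
    ∃ z ∈ M, ∃ z' ∈ M, z ≠ z' ∧ l1norm n (z - z') < η := by
  by_contra! hsep
  subst hM
  obtain ⟨z, hz⟩ : M.Nonempty := card_pos.1 (by omega)
  set N := {x ∈ M.erase z | l1norm n (x - z) ≤ β}
  have hNM : N ⊆ M := (filter_subset _ _).trans (erase_subset _ _)
  have hshell : ∀ x ∈ N, α ≤ l1norm n (x - z) ∧ l1norm n (x - z) ≤ β := fun x hx =>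
    ⟨le_l1norm_sub_of_forall_card_eq hb hbm hconn (hNM hx) hz
      (ne_of_mem_erase (mem_filter.1 hx).1), (mem_filter.1 hx).2⟩
  have hpack := card_le_of_pairwise_le_l1norm_sub hη hηα hαβ
    (fun x hx y hy => hsep x (hNM hx) y (hNM hy)) hshell
  have hN := card_sub_add_one_le_card_filter_l1norm_sub_le hb hbm hconn hz
  exact (Nat.cast_le.2 hN).trans hpack |>.not_gt hcard

/-- Practical bound, Eq. (6): in `(ℝⁿ, ‖·‖₁)`, if every `b`-sized
subset of `M` (`|M| = m ≥ b ≥ 2`) is α-β-connected (`0 < α ≤ β`, `0 < η ≤ 2α`) and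
`m − b + 1 > (2β/η + 1)ⁿ − (2α/η − 1)ⁿ`, then `M` is not η-separated. -/
theorem practical_bound
    (n : ℕ) (b m : ℕ) (hb : 2 ≤ b)
    (α β η : ℝ) (hα : 0 < α) (hαβ : α ≤ β) (hη : 0 < η) (hηα : η ≤ 2 * α)
    (M : Finset (Fin n → ℝ)) (hM : M.card = m) (hbm : b ≤ m)
    (hconn : ∀ S ⊆ M, S.card = b → ABConnected n α β S)
    (hcard : ((m - b + 1 : ℕ) : ℝ) > (2 * β / η + 1) ^ n - (2 * α / η - 1) ^ n) :
    ∃ z ∈ M, ∃ z' ∈ M, z ≠ z' ∧ l1norm n (z - z') < η :=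
  practical_bound_general n b m hb α β η hαβ hη hηα M hM hbm hconn hcard
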